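/- Let G be a simple connected graph on n vertices having exactly p pendant vertices, where p ≥ 2 and n ≥ p + 3. Let ℓ ≥ 0 and 0 ≤ t ≤ n−p−1 be the unique integers with p = ℓ(n−p) + t. Then Π1(G) ≤ (n+ℓ−p)^{2t} · (n+ℓ−p−1)^{2(n−p−t)}, with equality if and only if G is isomorphic to G_a, the graph obtained from the complete graph K_{n−p} by attaching ℓ+1 pendant vertices to each of t of its vertices and ℓ pendant vertices to each of the remaining n−p−t vertices. -/

import Mathlib

open SimpleGraph Finset

/-- Degree of a vertex (as `Nat.card` of its neighbor set). -/
noncomputable def mdeg {V : Type*} (G : SimpleGraph V) (v : V) : ℕ :=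
  Nat.card (G.neighborSet v)

/-- First multiplicative Zagreb index. -/
noncomputable def mZ1 {V : Type*} [Fintype V] (G : SimpleGraph V) : ℕ :=
  ∏ v : V, (mdeg G v) ^ 2

/-- Second multiplicative Zagreb index. -/
noncomputable def mZ2 {V : Type*} [Fintype V] (G : SimpleGraph V) : ℕ :=
  ∏ v : V, (mdeg G v) ^ (mdeg G v)

/-- The graph `G_a`: the complete graph on the first `n - p` vertices, where the `p`
pendant vertices are distributed as evenly as possible among the clique vertices
(pendant vertex `i` is attached to clique vertex `(i - (n - p)) % (n - p)`). -/
def Ga (n p : ℕ) : SimpleGraph (Fin n) :=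
  SimpleGraph.fromRel (fun u v =>
    (u.val < n - p ∧ v.val < n - p) ∨
    (n - p ≤ v.val ∧ u.val = (v.val - (n - p)) % (n - p)))

/-!
Let `C` be the set of non-pendant vertices, `m = |C| = n - p` and `b = m - 1 + l`, so that
`p = l m + t` gives `m (m - 1) + p = m b + t`. Each vertex of `C` has at most `m - 1` neighbours
in `C` and each pendant vertex at most one, so `∑_{v ∈ C} d(v) ≤ m b + t`, with equality only if
`C` is a clique carrying every pendant vertex. On the other hand `x ≤ b (1 + 1/b) ^ (x - b)` for
every `x ∈ ℕ`, with equality exactly for `x ∈ {b, b + 1}`; multiplying over `C` bounds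
`∏_{v ∈ C} d(v)` by `b ^ m (1 + 1/b) ^ t = (b + 1) ^ t b ^ (m - t)`, and `Π₁(G)` is the square of
this product. In the equality case `t` vertices of `C` carry `l + 1` pendant vertices and the
others `l`. Such a graph is isomorphic to `G_a` because both are described by the same labelling
(clique vertex `i` / pendant vertex at clique vertex `i`) with label classes of equal sizes.
-/

/-- The exponential `x ↦ b (1 + 1/b) ^ (x - b)` passes through `(b, b)` and `(b + 1, b + 1)`;
by Bernoulli's inequality it lies strictly above `x` at every other natural number. -/
theorem natCast_lt_mul_zpow_sub {b x : ℕ} (hb : 0 < b) (hxb : x ≠ b) (hxb' : x ≠ b + 1) :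
    (x : ℝ) < b * (1 + (b : ℝ)⁻¹) ^ ((x : ℤ) - b) := by
  have hb' : (0 : ℝ) < b := by exact_mod_cast hb
  rcases Nat.lt_or_ge x b with hlt | hge
  · obtain ⟨k, rfl⟩ := Nat.exists_eq_add_of_lt hlt
    have hexp : ((x : ℤ) - (x + k + 1 : ℕ)) = -((k + 1 : ℕ) : ℤ) := by push_cast; ring
    have hinv : (1 + ((x + k + 1 : ℕ) : ℝ)⁻¹)⁻¹ = 1 + -((x + k + 2 : ℕ) : ℝ)⁻¹ := by
      field_simp; push_cast; ring
    rw [hexp, zpow_neg, zpow_natCast, ← inv_pow, hinv]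
    have hinv_le : ((x + k + 2 : ℕ) : ℝ)⁻¹ ≤ 1 := inv_le_one_of_one_le₀ (by push_cast; linarith)
    calc (x : ℝ) < (x + k + 1 : ℕ) * (1 + (k + 1 : ℕ) * -((x + k + 2 : ℕ) : ℝ)⁻¹) := by
          push_cast; field_simp; nlinarith
      _ ≤ _ := by gcongr; exact one_add_mul_le_pow (by linarith) _
  · obtain ⟨k, rfl⟩ := Nat.exists_eq_add_of_le hge
    obtain ⟨j, rfl⟩ := Nat.exists_eq_add_of_le (show 2 ≤ k by omega)
    have hexp : (((b + (2 + j) : ℕ) : ℤ) - b) = ((j + 1 : ℕ) : ℤ) + 1 := by push_cast; ring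
    rw [hexp, zpow_add_one₀ (by positivity), zpow_natCast]
    have hinv_nonneg : (0 : ℝ) ≤ (b : ℝ)⁻¹ := by positivity
    calc ((b + (2 + j) : ℕ) : ℝ) < b * ((1 + (j + 1 : ℕ) * (b : ℝ)⁻¹) * (1 + (b : ℝ)⁻¹)) := by
          push_cast; field_simp; nlinarith
      _ ≤ _ := by gcongr; exact one_add_mul_le_pow (by linarith) _

theorem natCast_le_mul_zpow_sub {b : ℕ} (hb : 0 < b) (x : ℕ) :
    (x : ℝ) ≤ b * (1 + (b : ℝ)⁻¹) ^ ((x : ℤ) - b) := by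
  have hb' : (b : ℝ) ≠ 0 := by positivity
  rcases eq_or_ne x b with rfl | hxb
  · simp
  rcases eq_or_ne x (b + 1) with rfl | hxb'
  · push_cast; simp [mul_add, hb']
  exact (natCast_lt_mul_zpow_sub hb hxb hxb').le

theorem Finset.prod_zpow_eq_zpow_sum {ι G₀ : Type*} [CommGroupWithZero G₀] {a : G₀} (ha : a ≠ 0)
    (s : Finset ι) (e : ι → ℤ) : ∏ i ∈ s, a ^ e i = a ^ ∑ i ∈ s, e i := by
  classical
  induction s using Finset.induction_on with
  | empty => simp
  | insert i s hi ih => rw [prod_insert hi, sum_insert hi, ih, zpow_add₀ ha]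

section BalancedProduct

variable {ι : Type*} {s : Finset ι} {f : ι → ℕ} {b t : ℕ}

theorem prod_mul_zpow_sub_eq (c r : ℝ) (hr : r ≠ 0) :
    ∏ i ∈ s, c * r ^ ((f i : ℤ) - b) = c ^ #s * r ^ ((∑ i ∈ s, f i : ℕ) - #s * b : ℤ) := by
  rw [prod_mul_distrib, prod_const, prod_zpow_eq_zpow_sum hr, sum_sub_distrib]
  push_cast
  simp

theorem prod_natCast_le_pow_mul_zpow (hb : 0 < b) :
    ∏ i ∈ s, (f i : ℝ) ≤ (b : ℝ) ^ #s * (1 + (b : ℝ)⁻¹) ^ ((∑ i ∈ s, f i : ℕ) - #s * b : ℤ) := by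
  rw [← prod_mul_zpow_sub_eq _ _ (by positivity)]
  exact prod_le_prod (fun i _ => by positivity) fun i _ => natCast_le_mul_zpow_sub hb (f i)

theorem prod_natCast_lt_pow_mul_zpow (hb : 0 < b) (hpos : ∀ i ∈ s, 0 < f i)
    (hbad : ∃ i ∈ s, f i ≠ b ∧ f i ≠ b + 1) :
    ∏ i ∈ s, (f i : ℝ) < (b : ℝ) ^ #s * (1 + (b : ℝ)⁻¹) ^ ((∑ i ∈ s, f i : ℕ) - #s * b : ℤ) := by
  rw [← prod_mul_zpow_sub_eq _ _ (by positivity)]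
  obtain ⟨i, hi, hib, hib'⟩ := hbad
  exact prod_lt_prod (fun i hi => by exact_mod_cast hpos i hi)
    (fun i _ => natCast_le_mul_zpow_sub hb (f i)) ⟨i, hi, natCast_lt_mul_zpow_sub hb hib hib'⟩

theorem natCast_succ_pow_mul_pow_eq {m : ℕ} (hb : 0 < b) (ht : t ≤ m) :
    (((b + 1) ^ t * b ^ (m - t) : ℕ) : ℝ) = (b : ℝ) ^ m * (1 + (b : ℝ)⁻¹) ^ (t : ℤ) := by
  have hb' : (b : ℝ) ≠ 0 := by positivity
  rw [zpow_natCast, ← pow_sub_mul_pow _ ht, mul_assoc, ← mul_pow, mul_add, mul_one,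
    mul_inv_cancel₀ hb']
  push_cast; ring

theorem prod_le_pow_mul_pow_of_sum_le (hb : 0 < b) (ht : t ≤ #s)
    (hsum : ∑ i ∈ s, f i ≤ #s * b + t) : ∏ i ∈ s, f i ≤ (b + 1) ^ t * b ^ (#s - t) := by
  have hr : (1 : ℝ) ≤ 1 + (b : ℝ)⁻¹ := le_add_of_nonneg_right (by positivity)
  have : ∏ i ∈ s, (f i : ℝ) ≤ (((b + 1) ^ t * b ^ (#s - t) : ℕ) : ℝ) := by
    rw [natCast_succ_pow_mul_pow_eq hb ht]
    refine (prod_natCast_le_pow_mul_zpow hb).trans ?_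
    gcongr
    omega
  exact_mod_cast this

theorem eq_or_eq_add_one_and_sum_eq_of_prod_eq (hb : 0 < b) (ht : t ≤ #s)
    (hsum : ∑ i ∈ s, f i ≤ #s * b + t) (hprod : ∏ i ∈ s, f i = (b + 1) ^ t * b ^ (#s - t)) :
    (∀ i ∈ s, f i = b ∨ f i = b + 1) ∧ ∑ i ∈ s, f i = #s * b + t := by
  have hr : 1 < 1 + (b : ℝ)⁻¹ := lt_add_of_pos_right _ (by positivity)
  have hprod' : ∏ i ∈ s, (f i : ℝ) = (b : ℝ) ^ #s * (1 + (b : ℝ)⁻¹) ^ (t : ℤ) := by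
    rw [← natCast_succ_pow_mul_pow_eq hb ht, ← hprod]; push_cast; rfl
  have hpos : ∀ i ∈ s, 0 < f i := fun i hi => Nat.pos_of_ne_zero fun h0 => by
    rw [prod_eq_zero hi h0] at hprod
    exact absurd hprod.symm (by positivity)
  refine ⟨fun i hi => ?_, le_antisymm hsum ?_⟩
  · by_contra! hbad
    have := prod_natCast_lt_pow_mul_zpow hb hpos ⟨i, hi, hbad⟩
    rw [hprod', mul_lt_mul_iff_right₀ (by positivity), zpow_lt_zpow_iff_right₀ hr] at this
    omega
  · have := prod_natCast_le_pow_mul_zpow (s := s) (f := f) hb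
    rw [hprod', mul_le_mul_iff_right₀ (by positivity), zpow_le_zpow_iff_right₀ hr] at this
    omega

theorem sum_eq_card_mul_add_card_filter (h : ∀ i ∈ s, f i = b ∨ f i = b + 1) :
    ∑ i ∈ s, f i = #s * b + #{i ∈ s | f i = b + 1} := by
  rw [card_filter, ← smul_eq_mul, ← sum_const, ← sum_add_distrib]
  exact sum_congr rfl fun i hi => by rcases h i hi with h | h <;> simp [h]

end BalancedProduct

namespace SimpleGraph

variable {V : Type*} [Fintype V] [DecidableEq V] (G : SimpleGraph V) [DecidableRel G.Adj]

theorem sum_degree_eq_sum_card_neighborFinset_inter (s : Finset V) :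
    ∑ v ∈ s, G.degree v = ∑ w, #(G.neighborFinset w ∩ s) := by
  have := sum_card_bipartiteAbove_eq_sum_card_bipartiteBelow (s := s) (t := univ) (r := G.Adj)
  convert this using 3 with v - w
  · rw [← card_neighborFinset_eq_degree, neighborFinset_eq_filter]; rfl
  · ext v; simp [bipartiteBelow, adj_comm, and_comm]

theorem neighborFinset_inter_subset_erase (s : Finset V) (w : V) :
    G.neighborFinset w ∩ s ⊆ s.erase w :=
  fun v hv => mem_erase.2 ⟨by rintro rfl; simp at hv, (mem_inter.1 hv).2⟩

theorem sum_degree_le (s : Finset V) :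
    ∑ v ∈ s, G.degree v ≤ #s * (#s - 1) + ∑ w ∈ sᶜ, G.degree w := by
  rw [sum_degree_eq_sum_card_neighborFinset_inter, ← sum_add_sum_compl s]
  gcongr with w hw w
  · refine (sum_le_card_nsmul s _ (#s - 1) fun w hw => ?_).trans_eq (smul_eq_mul ..)
    exact (card_le_card (G.neighborFinset_inter_subset_erase s w)).trans_eq (card_erase_of_mem hw)
  · exact card_le_card inter_subset_left

theorem isClique_and_neighborFinset_subset_of_sum_degree_eq {s : Finset V}
    (h : ∑ v ∈ s, G.degree v = #s * (#s - 1) + ∑ w ∈ sᶜ, G.degree w) :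
    G.IsClique (s : Set V) ∧ ∀ w ∉ s, G.neighborFinset w ⊆ s := by
  rw [sum_degree_eq_sum_card_neighborFinset_inter, ← sum_add_sum_compl s] at h
  have hle₁ : ∀ w ∈ s, #(G.neighborFinset w ∩ s) ≤ #(s.erase w) := fun w _ =>
    card_le_card (G.neighborFinset_inter_subset_erase s w)
  have hle₂ : ∀ w ∈ sᶜ, #(G.neighborFinset w ∩ s) ≤ #(G.neighborFinset w) := fun w _ =>
    card_le_card inter_subset_left
  have hsum₁ := sum_le_sum hle₁
  have hsum₂ := sum_le_sum hle₂
  have herase : ∑ w ∈ s, #(s.erase w) = #s * (#s - 1) := by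
    rw [sum_congr rfl fun w hw => card_erase_of_mem hw, sum_const, smul_eq_mul]
  simp only [card_neighborFinset_eq_degree] at hsum₂
  have heq₁ := (sum_eq_sum_iff_of_le hle₁).1 (by omega)
  have heq₂ := (sum_eq_sum_iff_of_le hle₂).1 (by simp only [card_neighborFinset_eq_degree]; omega)
  refine ⟨fun w hw v hv hwv => ?_, fun w hw => ?_⟩
  · have hsub := eq_of_subset_of_card_le (G.neighborFinset_inter_subset_erase s w) (heq₁ w hw).ge
    have : v ∈ G.neighborFinset w ∩ s := hsub ▸ mem_erase.2 ⟨Ne.symm hwv, hv⟩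
    simpa using (mem_inter.1 this).1
  · exact inter_eq_left.1 (eq_of_subset_of_card_le inter_subset_left (heq₂ w (mem_compl.2 hw)).ge)

theorem compl_filter_degree_ne_one :
    ({v | G.degree v ≠ 1} : Finset V)ᶜ = ({v | G.degree v = 1} : Finset V) := by
  ext; simp

theorem sum_degree_compl_filter_degree_ne_one :
    ∑ v ∈ ({v | G.degree v ≠ 1} : Finset V)ᶜ, G.degree v = #{v | G.degree v = 1} := by
  rw [compl_filter_degree_ne_one, card_eq_sum_ones]
  exact sum_congr rfl fun v hv => (mem_filter.1 hv).2

theorem sum_degree_nonpendant_le :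
    ∑ v ∈ {v | G.degree v ≠ 1}, G.degree v ≤
      #{v | G.degree v ≠ 1} * (#{v | G.degree v ≠ 1} - 1) + #{v | G.degree v = 1} :=
  G.sum_degree_compl_filter_degree_ne_one ▸ G.sum_degree_le _

theorem degree_eq_card_sub_one_add_card_sdiff {s : Finset V} (hs : G.IsClique (s : Set V))
    {v : V} (hv : v ∈ s) : G.degree v = #s - 1 + #(G.neighborFinset v \ s) := by
  have : G.neighborFinset v ∩ s = s.erase v := (G.neighborFinset_inter_subset_erase s v).antisymm
    fun w hw => mem_inter.2 ⟨(G.mem_neighborFinset v w).2 (hs hv (mem_erase.1 hw).2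
      (mem_erase.1 hw).1.symm), (mem_erase.1 hw).2⟩
  rw [← card_neighborFinset_eq_degree, ← card_inter_add_card_sdiff _ s, this,
    card_erase_of_mem hv]

end SimpleGraph

theorem Finset.exists_bijOn_Iio_card_filter_first {α : Type*} [DecidableEq α] (s : Finset α)
    (P : α → Prop) [DecidablePred P] :
    ∃ σ : α → ℕ, Set.BijOn σ s (Set.Iio #s) ∧ ∀ x ∈ s, σ x < #{x ∈ s | P x} ↔ P x := by
  set L := {x ∈ s | P x}.toList ++ {x ∈ s | ¬P x}.toList
  have hmem : ∀ x, x ∈ L ↔ x ∈ s := by intro x; by_cases P x <;> simp [L, *]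
  have hlen : L.length = #s := by simp [L, card_filter_add_card_filter_not]
  have hnd : L.Nodup := by
    refine List.nodup_append.2 ⟨nodup_toList _, nodup_toList _, ?_⟩
    simp only [mem_toList, mem_filter]
    rintro x ⟨-, hx⟩ y ⟨-, hy⟩ rfl
    exact hy hx
  refine ⟨L.idxOf, ⟨fun x hx => ?_, fun x hx y _ h => ?_, fun i hi => ?_⟩, fun x hx => ?_⟩
  · rw [Set.mem_Iio, ← hlen]
    exact List.idxOf_lt_length_of_mem ((hmem x).2 hx)
  · exact (List.idxOf_inj ((hmem x).2 hx)).1 h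
  · rw [Set.mem_Iio, ← hlen] at hi
    exact ⟨L[i], (hmem _).1 (List.getElem_mem hi), hnd.idxOf_getElem i hi⟩
  · by_cases hP : P x
    · have : x ∈ {x ∈ s | P x}.toList := by simp [hx, hP]
      simp only [L, List.idxOf_append_of_mem this, hP, iff_true]
      simpa using List.idxOf_lt_length_of_mem this
    · have : x ∉ {x ∈ s | P x}.toList := by simp [hP]
      simp [L, List.idxOf_append_of_notMem this, hP]

theorem SimpleGraph.nonempty_iso_of_adj_iff_label {V W γ : Type*} [Finite V] [Finite W]
    {G : SimpleGraph V} {H : SimpleGraph W} (f : V → γ) (g : W → γ) (R : γ → γ → Prop)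
    (hG : ∀ x y, G.Adj x y ↔ x ≠ y ∧ R (f x) (f y)) (hH : ∀ x y, H.Adj x y ↔ x ≠ y ∧ R (g x) (g y))
    (hfib : ∀ c, Nat.card {x // f x = c} = Nat.card {y // g y = c}) : Nonempty (G ≃g H) := by
  let e : V ≃ W := Equiv.ofFiberEquiv fun c => (Finite.card_eq.1 (hfib c)).some
  have hge : ∀ x, g (e x) = f x := Equiv.ofFiberEquiv_map _
  exact ⟨⟨e, fun {x y} => by rw [hG, hH, hge, hge, e.injective.ne_iff]⟩⟩

/-- Adjacency of a clique with pendant vertices in terms of vertex labels: `(i, true)` labels the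
clique vertex with index `i` and `(i, false)` a pendant vertex attached to it. -/
def PendantCliqueRel (x y : ℕ × Bool) : Prop := (x.2 ∧ y.2) ∨ ((x.2 ∨ y.2) ∧ x.1 = y.1)

def gaLabel (m k : ℕ) : ℕ × Bool := (k % m, decide (k < m))

theorem gaLabel_rel_iff {m u v : ℕ} (hm : 0 < m) :
    ((u < m ∧ v < m) ∨ (m ≤ v ∧ u = (v - m) % m)) ∨ ((v < m ∧ u < m) ∨ (m ≤ u ∧ v = (u - m) % m))
      ↔ PendantCliqueRel (gaLabel m u) (gaLabel m v) := by
  simp only [PendantCliqueRel, gaLabel, decide_eq_true_eq]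
  rcases lt_or_ge u m with hu | hu <;> rcases lt_or_ge v m with hv | hv
  · simp [hu, hv]
  · rw [Nat.mod_eq_of_lt hu, ← Nat.mod_eq_sub_mod hv]
    have := Nat.mod_lt v hm
    constructor <;> omega
  · rw [Nat.mod_eq_of_lt hv, ← Nat.mod_eq_sub_mod hu]
    have := Nat.mod_lt u hm
    constructor <;> omega
  · have := Nat.mod_lt (u - m) hm
    have := Nat.mod_lt (v - m) hm
    constructor <;> omega

theorem Ga_adj_iff {n p : ℕ} (hm : 0 < n - p) (u v : Fin n) :
    (Ga n p).Adj u v ↔ u ≠ v ∧ PendantCliqueRel (gaLabel (n - p) u) (gaLabel (n - p) v) := by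
  rw [Ga, fromRel_adj, gaLabel_rel_iff hm]

theorem Fin.natCard_subtype_eq_count {n : ℕ} (P : ℕ → Prop) [DecidablePred P] :
    Nat.card {v : Fin n // P v} = Nat.count P n := by
  rw [Nat.count_eq_card_filter_range, Nat.card_eq_fintype_card, Fintype.card_subtype,
    ← card_map Fin.valEmbedding]
  congr 1
  ext k
  simp only [mem_map, mem_filter, mem_univ, true_and, mem_range, Fin.valEmbedding_apply]
  exact ⟨by rintro ⟨v, hv, rfl⟩; exact ⟨v.2, hv⟩, fun h => ⟨⟨k, h.1⟩, h.2, rfl⟩⟩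

theorem Nat.count_mod_eq_mul_add {m l t i : ℕ} (ht : t < m) (hi : i < m) :
    Nat.count (· % m = i) (l * m + t) = l + if i < t then 1 else 0 := by
  have hm : 0 < m := by omega
  have := Nat.count_modEq_card (l * m + t) hm i
  simp only [Nat.ModEq, Nat.mod_eq_of_lt hi] at this
  have hdiv : (l * m + t) / m = l := by
    rw [Nat.add_comm, Nat.add_mul_div_right _ _ hm, Nat.div_eq_of_lt ht, zero_add]
  rwa [Nat.mul_add_mod_of_lt ht, hdiv] at this

theorem natCard_gaLabel_eq_root {n m : ℕ} (hmn : m ≤ n) (i : ℕ) :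
    Nat.card {v : Fin n // gaLabel m v = (i, true)} = if i < m then 1 else 0 := by
  have key : ∀ k, gaLabel m k = (i, true) ↔ k = i ∧ i < m := fun k => by
    simp only [gaLabel, Prod.mk.injEq, decide_eq_true_eq]
    constructor
    · rintro ⟨rfl, hk⟩; rw [Nat.mod_eq_of_lt hk]; exact ⟨rfl, hk⟩
    · rintro ⟨rfl, hk⟩; exact ⟨Nat.mod_eq_of_lt hk, hk⟩
  rw [Fin.natCard_subtype_eq_count (gaLabel m · = (i, true))]
  simp only [key]
  split_ifs with hi
  · simp [Nat.count_eq_card_filter_range, hi, show i < n by omega]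
  · simp [hi]

theorem natCard_gaLabel_eq_pendant {n p l t : ℕ} (hlt : p = l * (n - p) + t) (ht : t < n - p)
    (i : ℕ) : Nat.card {v : Fin n // gaLabel (n - p) v = (i, false)} =
      if i < n - p then l + (if i < t then 1 else 0) else 0 := by
  rw [Fin.natCard_subtype_eq_count (gaLabel (n - p) · = (i, false)), show n = (n - p) + p by omega,
    Nat.add_sub_cancel, Nat.count_add]
  set m := n - p
  have hroot : Nat.count (gaLabel m · = (i, false)) m = 0 :=
    Nat.count_iff_forall_not.2 fun k hk => by simp [gaLabel, hk]
  have hshift : ∀ k, gaLabel m (m + k) = (i, false) ↔ k % m = i := fun k => by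
    simp [gaLabel, Nat.add_mod_left]
  simp only [hroot, hshift, zero_add]
  by_cases hi : i < m
  · rw [if_pos hi, hlt]; exact Nat.count_mod_eq_mul_add ht hi
  · rw [if_neg hi]
    exact Nat.count_iff_forall_not.2 fun k _ hk => hi (hk ▸ Nat.mod_lt k (by omega))

theorem mdeg_eq_degree {V : Type*} (G : SimpleGraph V) (v : V) [Fintype (G.neighborSet v)] :
    mdeg G v = G.degree v := by
  rw [mdeg, Nat.card_eq_fintype_card, card_neighborSet_eq_degree]

theorem mZ1_congr {V W : Type*} [Fintype V] [Fintype W] {G : SimpleGraph V} {H : SimpleGraph W}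
    (e : G ≃g H) : mZ1 G = mZ1 H :=
  Fintype.prod_equiv e.toEquiv _ _ fun v => by
    rw [mdeg, mdeg, Nat.card_congr (e.mapNeighborSet v)]; rfl

theorem mZ1_eq_sq_prod_degree {V : Type*} [Fintype V] (G : SimpleGraph V) [DecidableRel G.Adj] :
    mZ1 G = (∏ v ∈ {v | G.degree v ≠ 1}, G.degree v) ^ 2 := by
  rw [mZ1, ← prod_pow, prod_filter_of_ne fun v _ h => by rintro hv; simp [hv] at h]
  simp only [mdeg_eq_degree]

theorem mdeg_Ga_of_le {n p : ℕ} (hm : 0 < n - p) (v : Fin n) (hv : n - p ≤ v) :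
    mdeg (Ga n p) v = 1 := by
  have hv' : ¬ (v : ℕ) < n - p := by omega
  have : ∀ w : Fin n, w ∈ (Ga n p).neighborSet v ↔
      gaLabel (n - p) w = ((v : ℕ) % (n - p), true) := fun w => by
    simp only [mem_neighborSet, Ga_adj_iff hm, PendantCliqueRel, gaLabel, Prod.mk.injEq,
      decide_eq_true_eq, hv', false_and, false_or]
    refine ⟨fun ⟨_, hw, hvw⟩ => ⟨hvw.symm, hw⟩, fun ⟨hvw, hw⟩ => ⟨?_, hw, hvw.symm⟩⟩
    rintro rfl
    exact hv' hw
  rw [mdeg, Nat.card_congr (Equiv.subtypeEquivRight this), natCard_gaLabel_eq_root (by omega),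
    if_pos (Nat.mod_lt v hm)]

theorem mdeg_Ga_of_lt {n p l t : ℕ} (hlt : p = l * (n - p) + t) (ht : t < n - p) (v : Fin n)
    (hv : v < n - p) : mdeg (Ga n p) v = n - p - 1 + (l + if (v : ℕ) < t then 1 else 0) := by
  classical
  have hm : 0 < n - p := by omega
  set C : Finset (Fin n) := {w | (w : ℕ) < n - p}
  have hC : (Ga n p).IsClique (C : Set (Fin n)) := fun x hx y hy hxy =>
    (Ga_adj_iff hm x y).2
      ⟨hxy, Or.inl ⟨by simpa [gaLabel, C] using hx, by simpa [gaLabel, C] using hy⟩⟩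
  have hcard : #C = n - p := by simp only [C, Fin.card_filter_val_lt]; omega
  have hpend : ∀ w : Fin n,
      w ∈ (Ga n p).neighborFinset v \ C ↔ gaLabel (n - p) w = ((v : ℕ), false) := fun w => by
    simp only [C, mem_sdiff, mem_neighborFinset, mem_filter, mem_univ, true_and, Ga_adj_iff hm,
      PendantCliqueRel, gaLabel, Prod.mk.injEq, decide_eq_true_eq, decide_eq_false_iff_not, hv,
      Nat.mod_eq_of_lt hv, true_and, true_or]
    constructor
    · rintro ⟨⟨-, hw | hvw⟩, hw'⟩
      · exact absurd hw hw'
      · exact ⟨hvw.symm, hw'⟩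
    · rintro ⟨hvw, hw⟩
      exact ⟨⟨fun h => hw (h ▸ hv), Or.inr hvw.symm⟩, hw⟩
  rw [mdeg_eq_degree, degree_eq_card_sub_one_add_card_sdiff _ hC (by simpa [C] using hv), hcard,
    ← Nat.card_eq_finsetCard, Nat.card_congr (Equiv.subtypeEquivRight hpend),
    natCard_gaLabel_eq_pendant hlt ht, if_pos hv]

theorem mZ1_Ga {n p l t : ℕ} (hlt : p = l * (n - p) + t) (ht : t < n - p) :
    mZ1 (Ga n p) = (n + l - p) ^ (2 * t) * (n + l - p - 1) ^ (2 * (n - p - t)) := by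
  let d : ℕ → ℕ := fun k => if k < t then n + l - p else if k < n - p then n + l - p - 1 else 1
  have hdeg : ∀ v : Fin n, mdeg (Ga n p) v = d v := fun v => by
    by_cases hv : (v : ℕ) < n - p
    · rw [mdeg_Ga_of_lt hlt ht v hv]; simp only [d]; split_ifs <;> omega
    · rw [mdeg_Ga_of_le (by omega) v (by omega)]; simp only [d]; split_ifs <;> omega
  have h₁ : ∀ k ∈ range t, d k ^ 2 = (n + l - p) ^ 2 := fun k hk => by
    simp [d, mem_range.1 hk]
  have h₂ : ∀ k ∈ Ico t (n - p), d k ^ 2 = (n + l - p - 1) ^ 2 := fun k hk => by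
    obtain ⟨hk₁, hk₂⟩ := mem_Ico.1 hk
    simp [d, hk₂, not_lt.2 hk₁]
  have h₃ : ∀ k ∈ Ico (n - p) n, d k ^ 2 = 1 := fun k hk => by
    obtain ⟨hk₁, -⟩ := mem_Ico.1 hk
    simp [d, not_lt.2 hk₁, show ¬ k < t by omega]
  rw [mZ1, Fintype.prod_congr _ _ fun v => by rw [hdeg], Fin.prod_univ_eq_prod_range (d · ^ 2),
    ← prod_range_mul_prod_Ico _ (show t ≤ n by omega),
    ← prod_Ico_consecutive _ (show t ≤ n - p by omega) (show n - p ≤ n by omega),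
    prod_congr rfl h₁, prod_congr rfl h₂, prod_congr rfl h₃, prod_const, prod_const, prod_const_one,
    card_range, Nat.card_Ico, ← pow_mul, ← pow_mul, mul_one]

section CliqueWithPendants

variable {V : Type*}

structure IsCliqueWithPendants (G : SimpleGraph V) (C : Finset V) (a : V → V) : Prop where
  isClique : G.IsClique (C : Set V)
  mem : ∀ x, a x ∈ C
  apply_of_mem : ∀ x ∈ C, a x = x
  neighborSet_eq : ∀ x ∉ C, G.neighborSet x = {a x}

theorem exists_isCliqueWithPendants [Fintype V] [DecidableEq V] {G : SimpleGraph V}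
    [DecidableRel G.Adj] {C : Finset V} (hC : G.IsClique (C : Set V))
    (hdeg : ∀ x ∉ C, G.degree x = 1)
    (hsub : ∀ x ∉ C, G.neighborFinset x ⊆ C) : ∃ a, IsCliqueWithPendants G C a := by
  have : ∀ x, ∃ y, x ∉ C → G.neighborFinset x = {y} := fun x =>
    if hx : x ∈ C then ⟨x, fun h => absurd hx h⟩
    else (card_eq_one.1 (hdeg x hx)).imp fun _ hy _ => hy
  choose a₀ ha₀ using this
  refine ⟨fun x => if x ∈ C then x else a₀ x, hC, fun x => ?_, fun x hx => if_pos hx,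
    fun x hx => ?_⟩
  · split_ifs with hx
    · exact hx
    · exact hsub x hx (by rw [ha₀ x hx]; exact mem_singleton_self _)
  · rw [if_neg hx, ← coe_neighborFinset, ha₀ x hx, coe_singleton]

theorem SimpleGraph.exists_isCliqueWithPendants_of_sum_degree_eq [Fintype V] [DecidableEq V]
    (G : SimpleGraph V) [DecidableRel G.Adj]
    (h : ∑ v ∈ {v | G.degree v ≠ 1}, G.degree v =
      #{v | G.degree v ≠ 1} * (#{v | G.degree v ≠ 1} - 1) + #{v | G.degree v = 1}) :
    ∃ a, IsCliqueWithPendants G {v | G.degree v ≠ 1} a := by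
  rw [← G.sum_degree_compl_filter_degree_ne_one] at h
  obtain ⟨hC, hsub⟩ := G.isClique_and_neighborFinset_subset_of_sum_degree_eq h
  exact exists_isCliqueWithPendants hC (by simp) hsub

namespace IsCliqueWithPendants

variable {G : SimpleGraph V} {C : Finset V} {a : V → V} {σ : V → ℕ}

theorem adj_iff_of_notMem (h : IsCliqueWithPendants G C a) {x y : V} (hx : x ∉ C) :
    G.Adj x y ↔ y = a x := by
  rw [← mem_neighborSet, h.neighborSet_eq x hx, Set.mem_singleton_iff]

variable [DecidableEq V]

theorem adj_iff (h : IsCliqueWithPendants G C a) (hσ : Set.InjOn σ C) (x y : V) :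
    G.Adj x y ↔ x ≠ y ∧
      PendantCliqueRel (σ (a x), decide (x ∈ C)) (σ (a y), decide (y ∈ C)) := by
  have hinj : σ (a x) = σ (a y) ↔ a x = a y := hσ.eq_iff (h.mem x) (h.mem y)
  simp only [PendantCliqueRel, decide_eq_true_eq, hinj]
  by_cases hx : x ∈ C <;> by_cases hy : y ∈ C
  · simpa [hx, hy] using ⟨G.ne_of_adj, fun hxy => h.isClique hx hy hxy⟩
  · rw [G.adj_comm, h.adj_iff_of_notMem hy, h.apply_of_mem x hx]
    simp only [hx, hy]
    grind
  · rw [h.adj_iff_of_notMem hx, h.apply_of_mem y hy]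
    simp only [hx, hy]
    grind
  · simp only [hx, hy, false_and, or_false, and_false, iff_false, h.adj_iff_of_notMem hx]
    exact fun hya => hy (hya ▸ h.mem x)

theorem natCard_label_eq_root (h : IsCliqueWithPendants G C a)
    (hσ : Set.BijOn σ C (Set.Iio #C)) (i : ℕ) :
    Nat.card {x // (σ (a x), decide (x ∈ C)) = (i, true)} = if i < #C then 1 else 0 := by
  simp only [Prod.mk.injEq, decide_eq_true_eq]
  split_ifs with hi
  · obtain ⟨c, hc, rfl⟩ := hσ.surjOn hi
    have : ∀ x, σ (a x) = σ c ∧ x ∈ C ↔ x = c := fun x => by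
      constructor
      · rintro ⟨hxc, hx⟩
        rw [h.apply_of_mem x hx] at hxc
        exact hσ.injOn hx hc hxc
      · rintro rfl
        exact ⟨by rw [h.apply_of_mem x hc], hc⟩
    rw [Nat.card_congr (Equiv.subtypeEquivRight this), Nat.card_unique]
  · rw [Nat.card_eq_zero]
    exact Or.inl ⟨fun ⟨x, hxi, _⟩ => hi (hxi ▸ hσ.mapsTo (h.mem x))⟩

theorem natCard_label_eq_pendant [Fintype V] [DecidableRel G.Adj] (h : IsCliqueWithPendants G C a)
    (hσ : Set.BijOn σ C (Set.Iio #C)) (q : ℕ → ℕ)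
    (hq : ∀ x ∈ C, #(G.neighborFinset x \ C) = q (σ x)) (i : ℕ) :
    Nat.card {x // (σ (a x), decide (x ∈ C)) = (i, false)} = if i < #C then q i else 0 := by
  simp only [Prod.mk.injEq, decide_eq_false_iff_not]
  split_ifs with hi
  · obtain ⟨c, hc, rfl⟩ := hσ.surjOn hi
    have : ∀ x, σ (a x) = σ c ∧ x ∉ C ↔ x ∈ G.neighborFinset c \ C := fun x => by
      rw [mem_sdiff, mem_neighborFinset, G.adj_comm, and_congr_left_iff]
      intro hx
      rw [h.adj_iff_of_notMem hx, hσ.injOn.eq_iff (h.mem x) hc, eq_comm]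
    rw [Nat.card_congr (Equiv.subtypeEquivRight this), Nat.card_eq_finsetCard, hq c hc]
  · rw [Nat.card_eq_zero]
    exact Or.inl ⟨fun ⟨x, hxi, _⟩ => hi (hxi ▸ hσ.mapsTo (h.mem x))⟩

theorem nonempty_iso_Ga {n p l t : ℕ} (hlt : p = l * (n - p) + t) (ht : t < n - p)
    {G : SimpleGraph (Fin n)} [DecidableRel G.Adj] {C : Finset (Fin n)} {a : Fin n → Fin n}
    (h : IsCliqueWithPendants G C a) (hC : #C = n - p)
    (hdeg : ∀ x ∈ C, G.degree x = n - p - 1 + l ∨ G.degree x = n - p - 1 + l + 1)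
    (hheavy : #{x ∈ C | G.degree x = n - p - 1 + l + 1} = t) : Nonempty (G ≃g Ga n p) := by
  obtain ⟨σ, hσ, hσt⟩ := C.exists_bijOn_Iio_card_filter_first (G.degree · = n - p - 1 + l + 1)
  rw [hheavy] at hσt
  have hq : ∀ x ∈ C, #(G.neighborFinset x \ C) = l + if σ x < t then 1 else 0 := fun x hx => by
    have := G.degree_eq_card_sub_one_add_card_sdiff h.isClique hx
    rcases hdeg x hx with hx' | hx'
    · rw [if_neg (by rw [hσt x hx]; omega)]; omega
    · rw [if_pos ((hσt x hx).2 hx')]; omega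
  refine SimpleGraph.nonempty_iso_of_adj_iff_label (fun x => (σ (a x), decide (x ∈ C)))
    (fun v : Fin n => gaLabel (n - p) v) PendantCliqueRel (h.adj_iff hσ.injOn)
    (Ga_adj_iff (by omega)) ?_
  rintro ⟨i, _ | _⟩
  · rw [h.natCard_label_eq_pendant hσ (fun i => l + if i < t then 1 else 0) hq,
      natCard_gaLabel_eq_pendant hlt ht, hC]
  · rw [h.natCard_label_eq_root hσ, natCard_gaLabel_eq_root (by omega), hC]

end IsCliqueWithPendants

end CliqueWithPendants

theorem stmt6_general (n p l t : ℕ) (hn : p + 3 ≤ n)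
    (hlt : p = l * (n - p) + t) (ht : t ≤ n - p - 1)
    (G : SimpleGraph (Fin n))
    (hpend : Nat.card {v : Fin n | mdeg G v = 1} = p) :
    mZ1 G ≤ (n + l - p) ^ (2 * t) * (n + l - p - 1) ^ (2 * (n - p - t)) ∧
      (mZ1 G = (n + l - p) ^ (2 * t) * (n + l - p - 1) ^ (2 * (n - p - t)) ↔
        Nonempty (G ≃g Ga n p)) := by
  classical
  have hP : #{v | G.degree v = 1} = p := by
    rw [← hpend, ← Nat.card_eq_finsetCard]; congr; ext; simp [mdeg_eq_degree]
  set C : Finset (Fin n) := {v | G.degree v ≠ 1}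
  have hC : #C = n - p := by
    have := C.card_add_card_compl
    rw [G.compl_filter_degree_ne_one, hP, Fintype.card_fin] at this; omega
  set b := n - p - 1 + l
  have hmb : #C * (#C - 1) + p = #C * b + t := by rw [hC, Nat.mul_add, Nat.mul_comm _ l]; omega
  have hsum : ∑ v ∈ C, G.degree v ≤ #C * b + t := hmb ▸ hP ▸ G.sum_degree_nonpendant_le
  have hB : (n + l - p) ^ (2 * t) * (n + l - p - 1) ^ (2 * (n - p - t)) =
      ((b + 1) ^ t * b ^ (#C - t)) ^ 2 := by
    rw [hC, mul_pow, ← pow_mul, ← pow_mul, show n + l - p - 1 = b by omega,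
      show n + l - p = b + 1 by omega, mul_comm t, mul_comm (n - p - t)]
  rw [mZ1_eq_sq_prod_degree, hB]
  refine ⟨Nat.pow_le_pow_left (prod_le_pow_mul_pow_of_sum_le (by omega) (by omega) hsum) 2,
    fun heq => ?_, fun ⟨e⟩ => ?_⟩
  · obtain ⟨hval, hsum_eq⟩ := eq_or_eq_add_one_and_sum_eq_of_prod_eq (by omega) (by omega) hsum
      (Nat.pow_left_injective two_ne_zero heq)
    obtain ⟨a, ha⟩ := G.exists_isCliqueWithPendants_of_sum_degree_eq (by rw [hsum_eq, hP, hmb])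
    have hheavy : #{v ∈ C | G.degree v = b + 1} = t := by
      have := sum_eq_card_mul_add_card_filter hval; omega
    exact ha.nonempty_iso_Ga hlt (by omega) hC hval hheavy
  · rw [← mZ1_eq_sq_prod_degree, ← hB, mZ1_congr e, mZ1_Ga hlt (by omega)]

theorem stmt6 (n p l t : ℕ) (hp : 2 ≤ p) (hn : p + 3 ≤ n)
    (hlt : p = l * (n - p) + t) (ht : t ≤ n - p - 1)
    (G : SimpleGraph (Fin n)) (hG : G.Connected)
    (hpend : Nat.card {v : Fin n | mdeg G v = 1} = p) :
    mZ1 G ≤ (n + l - p) ^ (2 * t) * (n + l - p - 1) ^ (2 * (n - p - t)) ∧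
      (mZ1 G = (n + l - p) ^ (2 * t) * (n + l - p - 1) ^ (2 * (n - p - t)) ↔
        Nonempty (G ≃g Ga n p)) :=
  stmt6_general n p l t hn hlt ht G hpend
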